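/- arXiv:2412.05083 — 3 statements merged into one kernel-verified Lean document; each statement's English description precedes it below -/
import Mathlib

section
/- With the successive-division data for coprime 1 < n < m, for every even k with 2 ≤ k ≤ q one has n - r_{k-1} = (n - r₁) + Σ_{i=1}^{(k-2)/2} h_{2i}·r_{2i}. -/
/-- With the successive-division data for coprime `1 < n < m`, for every even
`k` with `2 ≤ k ≤ q`:
`n - r (k-1) = (n - r 1) + Σ_{i=1}^{(k-2)/2} h (2i) * r (2i)`. -/
theorem stmt_7 (n m q : ℕ) (r h : ℕ → ℕ)
    (hn : 1 < n) (hnm : n < m) (hgcd : Nat.gcd n m = 1) (hq : 1 ≤ q)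
    (hr0 : r 0 = n) (hm : m = h 0 * n + r 1)
    (hrec : ∀ k, k + 2 ≤ q → r k = h (k + 1) * r (k + 1) + r (k + 2))
    (hlast : r (q - 1) = h q * r q) (hrq : r q = 1)
    (hdec : ∀ k, 1 ≤ k → k ≤ q → r k < r (k - 1))
    (hrpos : ∀ k, k ≤ q → 0 < r k) :
    ∀ k, Even k → 2 ≤ k → k ≤ q →
      (n : ℤ) - r (k - 1)
        = ((n : ℤ) - r 1)
          + ∑ i ∈ Finset.range ((k - 2) / 2),
              (h (2 * (i + 1)) : ℤ) * r (2 * (i + 1)) := by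
  have key : ∀ j, 2 * j + 2 ≤ q →
      (n : ℤ) - r (2 * j + 2 - 1)
        = ((n : ℤ) - r 1)
          + ∑ i ∈ Finset.range j,
              (h (2 * (i + 1)) : ℤ) * r (2 * (i + 1)) := by
    intro j
    induction j with
    | zero => simp
    | succ j ih =>
      intro hle
      have hle' : 2 * j + 2 ≤ q := by omega
      have hrec' := hrec (2 * j + 1) (by omega)
      have := ih hle'
      rw [Finset.sum_range_succ, ← add_assoc, ← this]
      have e1 : 2 * j + 2 - 1 = 2 * j + 1 := by omega
      have e2 : 2 * (j + 1) + 2 - 1 = 2 * j + 1 + 2 := by omega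
      have e3 : 2 * (j + 1) = 2 * j + 1 + 1 := by omega
      rw [e1, e2, e3, hrec']
      push_cast
      ring
  intro k hk h2 hkq
  obtain ⟨j, hj⟩ : ∃ j, k = 2 * j + 2 := by
    obtain ⟨t, ht⟩ := hk; exact ⟨t - 1, by omega⟩
  subst hj
  have e : (2 * j + 2 - 2) / 2 = j := by omega
  rw [e]
  exact key j hkq
end

section
/- Let n, m ∈ ℕ with 1 < n < m and gcd(n,m) = 1, and define r_k, h_k by the Euclidean algorithm (r₀ = n, m = h₀n + r₁, r_{k-2} = h_{k-1}r_{k-1} + r_k), and b_k, c_k, d_k by b_{-1}=0, b₀=1, c_{-1}=1, c₀=0, d_{-1}=1, d₀=h₀, and x_k = x_{k-1}h_k + x_{k-2}. Then for even k with 2 ≤ k ≤ q and every j with 1 ≤ j ≤ h_k, setting b_{k,j} = b_{k-1}j + b_{k-2} and d_{k,j} = d_{k-1}j + d_{k-2}, one has n·d_{k,j} + (r_{k-1} - r_k·j) = m·b_{k,j}, with 0 ≤ r_{k-1} - r_k·j < n. -/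
/-- With the Euclidean-algorithm data for coprime `1 < n < m` and the shifted
continuant sequences `B`, `D` (`B (k+1)` = paper's `b_k` with `B 0 = 0`,
`B 1 = 1`; `D (k+1)` = paper's `d_k` with `D 0 = 1`, `D 1 = h 0`), for even
`k` with `2 ≤ k ≤ q` and `1 ≤ j ≤ h k`, setting
`b_{k,j} = b_{k-1}·j + b_{k-2} = B k * j + B (k-1)` and
`d_{k,j} = d_{k-1}·j + d_{k-2} = D k * j + D (k-1)`, one has
`n·d_{k,j} + (r_{k-1} - r_k·j) = m·b_{k,j}` with `0 ≤ r_{k-1} - r_k·j < n`. -/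
theorem stmt_15 (n m q : ℕ) (r h B D : ℕ → ℕ)
    (hn : 1 < n) (hnm : n < m) (hgcd : Nat.gcd n m = 1) (hq : 1 ≤ q)
    (hr0 : r 0 = n) (hm : m = h 0 * n + r 1)
    (hrec : ∀ k, k + 2 ≤ q → r k = h (k + 1) * r (k + 1) + r (k + 2))
    (hlast : r (q - 1) = h q * r q) (hrq : r q = 1)
    (hdec : ∀ k, 1 ≤ k → k ≤ q → r k < r (k - 1))
    (hrpos : ∀ k, k ≤ q → 0 < r k)
    (hB0 : B 0 = 0) (hB1 : B 1 = 1)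
    (hBrec : ∀ k, 1 ≤ k → B (k + 1) = B k * h k + B (k - 1))
    (hD0 : D 0 = 1) (hD1 : D 1 = h 0)
    (hDrec : ∀ k, 1 ≤ k → D (k + 1) = D k * h k + D (k - 1)) :
    ∀ k, Even k → 2 ≤ k → k ≤ q → ∀ j, 1 ≤ j → j ≤ h k →
      (0 ≤ (r (k - 1) : ℤ) - (r k : ℤ) * j) ∧
      ((r (k - 1) : ℤ) - (r k : ℤ) * j < n) ∧
      ((n : ℤ) * (D k * j + D (k - 1)) + ((r (k - 1) : ℤ) - (r k : ℤ) * j)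
        = (m : ℤ) * (B k * j + B (k - 1))) := by
  -- key identity: m*B k - n*D k = (-1)^(k+1) * r k, for k ≤ q
  have key : ∀ k, k ≤ q → (m : ℤ) * B k - (n : ℤ) * D k = (-1)^(k+1) * r k := by
    intro k
    induction k using Nat.strong_induction_on with
    | _ k ih =>
      match k with
      | 0 =>
        intro _
        simp [hB0, hD0, hr0]
      | 1 =>
        intro _
        have : (m : ℤ) = h 0 * n + r 1 := by exact_mod_cast hm
        simp [hB1, hD1]
        linarith [this]
      | (k+2) =>
        intro hk
        have h1 := ih (k+1) (by omega) (by omega)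
        have h0 := ih k (by omega) (by omega)
        have hrkZ : (r k : ℤ) = h (k+1) * r (k+1) + r (k+2) := by
          exact_mod_cast hrec k (by omega)
        have hB := hBrec (k+1) (by omega)
        have hD := hDrec (k+1) (by omega)
        simp only [Nat.add_sub_cancel] at hB hD
        rw [hB, hD]
        push_cast
        linear_combination ((h (k+1) : ℤ)) * h1 + h0 + (-1:ℤ)^(k+1) * hrkZ
  -- r is antitone on [0, q]
  have mono : ∀ a b, a ≤ b → b ≤ q → r b ≤ r a := by
    intro a b hab hbq
    induction b with
    | zero =>
      obtain rfl := Nat.le_zero.mp hab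
      exact le_refl _
    | succ b ihb =>
      rcases Nat.eq_or_lt_of_le hab with rfl | hlt
      · exact le_refl _
      · have h1 : r (b+1) < r b := by
          have := hdec (b+1) (by omega) hbq
          simpa using this
        have := ihb (by omega) (by omega)
        omega
  intro k hke hk2 hkq j hj1 hjh
  -- r (k-1) ≥ h k * r k
  have hge : h k * r k ≤ r (k - 1) := by
    rcases Nat.eq_or_lt_of_le hkq with rfl | hlt
    · omega
    · have := hrec (k - 1) (by omega)
      have hk1 : k - 1 + 1 = k := by omega
      have hk2' : k - 1 + 2 = k + 1 := by omega
      rw [hk1, hk2'] at this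
      omega
  have hjle : r k * j ≤ r (k-1) := by
    calc r k * j ≤ r k * h k := Nat.mul_le_mul_left _ hjh
    _ = h k * r k := Nat.mul_comm _ _
    _ ≤ r (k-1) := hge
  have hrkpos : 0 < r k := hrpos k hkq
  have hb1 : r (k-1) ≤ r 1 := mono 1 (k-1) (by omega) (by omega)
  have hb2 : r 1 < n := by
    have := hdec 1 (le_refl _) hq
    simpa [hr0] using this
  refine ⟨?_, ?_, ?_⟩
  · have : (r k : ℤ) * j ≤ r (k-1) := by exact_mod_cast hjle
    linarith
  · have h1 : (1:ℤ) ≤ (r k : ℤ) * j := by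
      have : 1 * 1 ≤ r k * j := Nat.mul_le_mul hrkpos hj1
      exact_mod_cast (by omega : 1 ≤ r k * j)
    have h2 : (r (k-1) : ℤ) < n := by exact_mod_cast lt_of_le_of_lt hb1 hb2
    linarith
  · have hkm1 : k - 1 + 1 = k := by omega
    have hkey := key k hkq
    have hkey' := key (k-1) (by omega)
    rw [hkm1] at hkey'
    -- signs: k even
    obtain ⟨t, ht⟩ := hke
    have hs1 : ((-1:ℤ))^(k+1) = -1 := by
      rw [ht]
      rw [show t + t + 1 = 2*t + 1 by ring]
      rw [pow_succ, pow_mul]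
      norm_num
    have hs2 : ((-1:ℤ))^k = 1 := by
      rw [ht, show t + t = 2*t by ring, pow_mul]
      norm_num
    rw [hs1] at hkey
    rw [hs2] at hkey'
    linear_combination (-(j:ℤ)) * hkey - hkey'
end

section
/- With the same Euclidean algorithm data for coprime 1 < n < m and sequences b_k, d_k as above, for odd k with 1 ≤ k ≤ q and every j with 1 ≤ j ≤ h_k, setting b_{k,j} = b_{k-1}j + b_{k-2} and d_{k,j} = d_{k-1}j + d_{k-2}, one has n·d_{k,j} - (r_{k-1} - r_k·j) = m·b_{k,j}, with 0 ≤ r_{k-1} - r_k·j < n. -/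
/-- With the Euclidean-algorithm data for coprime `1 < n < m` and the shifted
continuant sequences `B`, `D` (`B (k+1)` = paper's `b_k` with `B 0 = 0`,
`B 1 = 1`; `D (k+1)` = paper's `d_k` with `D 0 = 1`, `D 1 = h 0`), for odd
`k` with `1 ≤ k ≤ q` and `1 ≤ j ≤ h k`, setting
`b_{k,j} = b_{k-1}·j + b_{k-2} = B k * j + B (k-1)` and
`d_{k,j} = d_{k-1}·j + d_{k-2} = D k * j + D (k-1)`, one has
`n·d_{k,j} - (r_{k-1} - r_k·j) = m·b_{k,j}` with `0 ≤ r_{k-1} - r_k·j < n`. -/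
theorem stmt_16 (n m q : ℕ) (r h B D : ℕ → ℕ)
    (hn : 1 < n) (hnm : n < m) (hgcd : Nat.gcd n m = 1) (hq : 1 ≤ q)
    (hr0 : r 0 = n) (hm : m = h 0 * n + r 1)
    (hrec : ∀ k, k + 2 ≤ q → r k = h (k + 1) * r (k + 1) + r (k + 2))
    (hlast : r (q - 1) = h q * r q) (hrq : r q = 1)
    (hdec : ∀ k, 1 ≤ k → k ≤ q → r k < r (k - 1))
    (hrpos : ∀ k, k ≤ q → 0 < r k)
    (hB0 : B 0 = 0) (hB1 : B 1 = 1)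
    (hBrec : ∀ k, 1 ≤ k → B (k + 1) = B k * h k + B (k - 1))
    (hD0 : D 0 = 1) (hD1 : D 1 = h 0)
    (hDrec : ∀ k, 1 ≤ k → D (k + 1) = D k * h k + D (k - 1)) :
    ∀ k, Odd k → 1 ≤ k → k ≤ q → ∀ j, 1 ≤ j → j ≤ h k →
      (0 ≤ (r (k - 1) : ℤ) - (r k : ℤ) * j) ∧
      ((r (k - 1) : ℤ) - (r k : ℤ) * j < n) ∧
      ((n : ℤ) * (D k * j + D (k - 1)) - ((r (k - 1) : ℤ) - (r k : ℤ) * j)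
        = (m : ℤ) * (B k * j + B (k - 1))) := by
  have key : ∀ k, k ≤ q → (n : ℤ) * D k - (m : ℤ) * B k = (-1 : ℤ) ^ k * r k := by
    intro k
    induction k using Nat.strong_induction_on with
    | _ k ih =>
      match k with
      | 0 => intro _; simp [hD0, hB0, hr0]
      | 1 =>
        intro _
        rw [hD1, hB1]
        have : (m : ℤ) = h 0 * n + r 1 := by exact_mod_cast congrArg (Nat.cast : ℕ → ℤ) hm
        rw [this]; ring
      | (k+2) =>
        intro hk2
        have e1 := ih (k+1) (by omega) (by omega)
        have e0 := ih k (by omega) (by omega)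
        rw [hDrec (k+1) (by omega), hBrec (k+1) (by omega)]
        simp only [Nat.add_sub_cancel]
        have hr : (r k : ℤ) = h (k+1) * r (k+1) + r (k+2) := by
          exact_mod_cast congrArg (Nat.cast : ℕ → ℤ) (hrec k hk2)
        push_cast
        linear_combination (h (k+1) : ℤ) * e1 + e0 + (-1 : ℤ) ^ k * hr
  have hle : ∀ i, i ≤ q → r i ≤ n := by
    intro i
    induction i with
    | zero => intro _; simp [hr0]
    | succ i ih =>
      intro hi
      have h1 := hdec (i+1) (by omega) hi
      have h2 := ih (by omega)
      simp only [Nat.add_sub_cancel] at h1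
      omega
  intro k hodd hk1 hkq j hj1 hjh
  obtain ⟨k', rfl⟩ : ∃ k', k = k' + 1 := ⟨k - 1, by omega⟩
  simp only [Nat.add_sub_cancel]
  -- r k' ≥ h (k'+1) * r (k'+1)
  have hge : h (k'+1) * r (k'+1) ≤ r k' := by
    rcases eq_or_lt_of_le hkq with heq | hlt
    · rw [← heq] at hlast
      simp only [Nat.add_sub_cancel] at hlast
      exact le_of_eq hlast.symm
    · have := hrec k' (by omega)
      omega
  have hmul : r (k'+1) * j ≤ r k' := by
    calc r (k'+1) * j ≤ r (k'+1) * h (k'+1) := Nat.mul_le_mul_left _ hjh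
    _ = h (k'+1) * r (k'+1) := Nat.mul_comm _ _
    _ ≤ r k' := hge
  have hpos : 1 ≤ r (k'+1) * j := Nat.mul_pos (hrpos _ hkq) (by omega)
  have hrn : r k' ≤ n := hle k' (by omega)
  have hcast : (r (k'+1) : ℤ) * j = ((r (k'+1) * j : ℕ) : ℤ) := by push_cast; ring
  refine ⟨by rw [hcast]; omega, by rw [hcast]; omega, ?_⟩
  have e1 := key (k'+1) hkq
  have e0 := key k' (by omega)
  have hodd' : (-1 : ℤ) ^ (k'+1) = -1 := hodd.neg_one_pow
  have heven : (-1 : ℤ) ^ k' = 1 := by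
    exact (Nat.not_odd_iff_even.mp (Nat.odd_add_one.mp hodd)).neg_one_pow
  rw [hodd'] at e1
  rw [heven] at e0
  push_cast
  linear_combination (j : ℤ) * e1 + e0
end
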